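/- Let d ≥ 1, s ≥ d, and j ≥ 0 be integers. Define wₙ² = (2ⁿ(2d + j) + 1 − 2d)·(2ⁿ(2d + j) + 1 − d) / (2ⁿ(2d + j) + 1 + s − 2d)² for n ∈ ℕ, and set γ₀ = 1, γₙ = ∏_{m=0}^{n−1} w_m² for n ≥ 1. Then there exists a probability measure μ supported in [0,1] such that γₙ = ∫ tⁿ dμ(t) for all n ∈ ℕ. (These are the moments of the shift appearing on the orbit of founder j in the direct sum decomposition of B*_{z^t z̄^s}, with t = s − d ≥ 0, on the Bergman space; hence each such shift, and therefore B*_{z^t z̄^s}, is subnormal, and consequently B_{z^t z̄^s} is not hyponormal.) -/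

import Mathlib

/-!
With `q = 1/2` and `K = 2d + j`, dividing by `2ᵐ K` turns the `m`-th factor of `γₙ` into
`(1 - α qᵐ)(1 - β qᵐ) / (1 - g qᵐ)²` with `α = (2d - 1)/K`, `β = (d - 1)/K`,
`g = (2d - s - 1)/K`, so that `0 ≤ β ≤ α < 1` and `g ≤ β`.

For `0 ≤ c < 1` and `g ≤ c` the coefficients `Wₖ = ∏_{i<k} (c - g qⁱ)/(1 - qⁱ⁺¹)` are nonnegative
and summable, and by the `q`-binomial theorem `F x = ∑ Wₖ xᵏ = (g x; q)_∞ / (c x; q)_∞`; all that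
is needed is the functional equation `(1 - c x) F x = (1 - g x) F (q x)`. Iterating it,
`F (qⁿ) / F 1 = ∏_{m<n} (1 - c qᵐ)/(1 - g qᵐ)`, which is therefore the `n`-th moment of the
measure with masses `Wₖ / F 1` at the points `qᵏ ∈ [0, 1]`. Finally, `γ` is the product of two
such moment sequences, and a product of moment sequences on `[0, 1]` is the moment sequence of the
image of the product measure under multiplication.
-/

open MeasureTheory Filter Topology Finset

def IsHausdorffMomentSeq (γ : ℕ → ℝ) : Prop :=
  ∃ μ : Measure ℝ, IsProbabilityMeasure μ ∧ μ (Set.Icc (0 : ℝ) 1)ᶜ = 0 ∧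
    ∀ n : ℕ, ∫ t, t ^ n ∂μ = γ n

namespace IsHausdorffMomentSeq

theorem mul {γ₁ γ₂ : ℕ → ℝ} (h₁ : IsHausdorffMomentSeq γ₁) (h₂ : IsHausdorffMomentSeq γ₂) :
    IsHausdorffMomentSeq (fun n => γ₁ n * γ₂ n) := by
  obtain ⟨μ₁, _, hμ₁, hγ₁⟩ := h₁
  obtain ⟨μ₂, _, hμ₂, hγ₂⟩ := h₂
  have hmul : Measurable fun p : ℝ × ℝ => p.1 * p.2 := measurable_fst.mul measurable_snd
  refine ⟨(μ₁.prod μ₂).map (fun p => p.1 * p.2),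
    Measure.isProbabilityMeasure_map hmul.aemeasurable, ?_, fun n => ?_⟩
  · have h₁ : ∀ᵐ p ∂μ₁.prod μ₂, p.1 ∈ unitInterval :=
      Measure.quasiMeasurePreserving_fst.ae (ae_iff.2 hμ₁)
    have h₂ : ∀ᵐ p ∂μ₁.prod μ₂, p.2 ∈ unitInterval :=
      Measure.quasiMeasurePreserving_snd.ae (ae_iff.2 hμ₂)
    refine ae_iff.1 ((ae_map_iff hmul.aemeasurable measurableSet_Icc).2 ?_)
    filter_upwards [h₁, h₂] with p hp₁ hp₂ using unitInterval.mul_mem hp₁ hp₂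
  · rw [integral_map hmul.aemeasurable (continuous_pow n).aestronglyMeasurable]
    simp only [mul_pow]
    rw [integral_prod_mul (fun t : ℝ => t ^ n) (fun t : ℝ => t ^ n), hγ₁, hγ₂]

theorem of_hasSum {p x γ : ℕ → ℝ} (hp₀ : ∀ k, 0 ≤ p k) (hp : HasSum p 1)
    (hx : ∀ k, x k ∈ unitInterval) (hγ : ∀ n, HasSum (fun k => p k * x k ^ n) (γ n)) :
    IsHausdorffMomentSeq γ := by
  set μ : Measure ℝ := Measure.sum fun k => ENNReal.ofReal (p k) • Measure.dirac (x k)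
  have hprob : IsProbabilityMeasure μ := by
    refine ⟨?_⟩
    simp only [μ, Measure.sum_apply_of_countable, Measure.smul_apply, measure_univ, smul_eq_mul,
      mul_one]
    rw [← ENNReal.ofReal_tsum_of_nonneg hp₀ hp.summable, hp.tsum_eq, ENNReal.ofReal_one]
  have hsupp : μ unitIntervalᶜ = 0 := by
    simp [μ, Measure.sum_apply _ measurableSet_Icc.compl,
      Measure.dirac_apply' _ measurableSet_Icc.compl, hx]
  refine ⟨μ, hprob, hsupp, fun n => ?_⟩
  have hint : Integrable (fun t : ℝ => t ^ n) μ := by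
    refine .of_bound (continuous_pow n).aestronglyMeasurable 1 ?_
    filter_upwards [ae_iff.2 hsupp] with t ht
    rw [Real.norm_eq_abs, abs_pow]
    exact pow_le_one₀ (abs_nonneg t) (abs_le.2 ⟨by linarith [ht.1], ht.2⟩)
  rw [integral_sum_measure hint, ← (hγ n).tsum_eq]
  refine tsum_congr fun k => ?_
  rw [integral_smul_measure, integral_dirac, ENNReal.toReal_ofReal (hp₀ k), smul_eq_mul]

end IsHausdorffMomentSeq

noncomputable def qBinomialCoeff (q c g : ℝ) : ℕ → ℝ
  | 0 => 1
  | k + 1 => (c - g * q ^ k) / (1 - q ^ (k + 1)) * qBinomialCoeff q c g k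

noncomputable def qBinomialSeries (q c g x : ℝ) : ℝ :=
  ∑' k, qBinomialCoeff q c g k * x ^ k

section QBinomial

variable {q c g : ℝ}

theorem one_sub_pow_succ_pos (hq₀ : 0 ≤ q) (hq₁ : q < 1) (k : ℕ) : 0 < 1 - q ^ (k + 1) :=
  sub_pos.2 (pow_lt_one₀ hq₀ hq₁ k.succ_ne_zero)

theorem mul_pow_le_of_le (hq₀ : 0 ≤ q) (hq₁ : q ≤ 1) (hc : 0 ≤ c) (hgc : g ≤ c) (k : ℕ) :
    g * q ^ k ≤ c := by
  rcases le_total g 0 with hg | hg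
  · exact (mul_nonpos_of_nonpos_of_nonneg hg (pow_nonneg hq₀ k)).trans hc
  · exact (mul_le_of_le_one_right hg (pow_le_one₀ hq₀ hq₁)).trans hgc

theorem qBinomialCoeff_succ_mul (hq₀ : 0 ≤ q) (hq₁ : q < 1) (k : ℕ) :
    qBinomialCoeff q c g (k + 1) * (1 - q ^ (k + 1)) =
      (c - g * q ^ k) * qBinomialCoeff q c g k := by
  rw [qBinomialCoeff, mul_right_comm, div_mul_cancel₀ _ (one_sub_pow_succ_pos hq₀ hq₁ k).ne']

theorem qBinomialCoeff_nonneg (hq₀ : 0 ≤ q) (hq₁ : q < 1) (hc : 0 ≤ c) (hgc : g ≤ c) (k : ℕ) :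
    0 ≤ qBinomialCoeff q c g k := by
  induction k with
  | zero => exact zero_le_one
  | succ k ih =>
    exact mul_nonneg (div_nonneg (sub_nonneg.2 (mul_pow_le_of_le hq₀ hq₁.le hc hgc k))
      (one_sub_pow_succ_pos hq₀ hq₁ k).le) ih

theorem summable_qBinomialCoeff (hq₀ : 0 ≤ q) (hq₁ : q < 1) (hc₀ : 0 ≤ c) (hc₁ : c < 1)
    (hgc : g ≤ c) : Summable (qBinomialCoeff q c g) := by
  have hq : Tendsto (q ^ ·) atTop (𝓝 0) := tendsto_pow_atTop_nhds_zero_of_lt_one hq₀ hq₁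
  have hratio : Tendsto (fun k : ℕ => (c - g * q ^ k) / (1 - q ^ (k + 1))) atTop (𝓝 c) := by
    have h := ((hq.const_mul g).const_sub c).div
      ((hq.comp (tendsto_add_atTop_nat 1)).const_sub 1) (by norm_num)
    rwa [mul_zero, sub_zero, sub_zero, div_one] at h
  refine summable_of_ratio_norm_eventually_le (r := (1 + c) / 2) (by linarith) ?_
  filter_upwards [hratio.eventually_le_const (by linarith : c < (1 + c) / 2)] with k hk
  have hW := qBinomialCoeff_nonneg hq₀ hq₁ hc₀ hgc
  rw [Real.norm_of_nonneg (hW _), Real.norm_of_nonneg (hW _), qBinomialCoeff]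
  exact mul_le_mul_of_nonneg_right hk (hW k)

theorem summable_qBinomialCoeff_mul_pow (hq₀ : 0 ≤ q) (hq₁ : q < 1) (hc₀ : 0 ≤ c) (hc₁ : c < 1)
    (hgc : g ≤ c) {x : ℝ} (hx : x ∈ unitInterval) :
    Summable fun k => qBinomialCoeff q c g k * x ^ k :=
  (summable_qBinomialCoeff hq₀ hq₁ hc₀ hc₁ hgc).of_nonneg_of_le
    (fun k => mul_nonneg (qBinomialCoeff_nonneg hq₀ hq₁ hc₀ hgc k) (pow_nonneg hx.1 k))
    (fun k => mul_le_of_le_one_right (qBinomialCoeff_nonneg hq₀ hq₁ hc₀ hgc k)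
      (pow_le_one₀ hx.1 hx.2))

theorem qBinomialSeries_functional_eq (hq₀ : 0 ≤ q) (hq₁ : q < 1) (hc₀ : 0 ≤ c) (hc₁ : c < 1)
    (hgc : g ≤ c) {x : ℝ} (hx : x ∈ unitInterval) :
    (1 - c * x) * qBinomialSeries q c g x = (1 - g * x) * qBinomialSeries q c g (q * x) := by
  have hqx : q * x ∈ unitInterval := unitInterval.mul_mem ⟨hq₀, hq₁.le⟩ hx
  have hF := summable_qBinomialCoeff_mul_pow hq₀ hq₁ hc₀ hc₁ hgc hx
  have hFq := summable_qBinomialCoeff_mul_pow hq₀ hq₁ hc₀ hc₁ hgc hqx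
  have hshift : ∀ k, qBinomialCoeff q c g (k + 1) * x ^ (k + 1) -
      qBinomialCoeff q c g (k + 1) * (q * x) ^ (k + 1) =
      c * x * (qBinomialCoeff q c g k * x ^ k) -
        g * x * (qBinomialCoeff q c g k * (q * x) ^ k) := by
    intro k
    linear_combination x ^ (k + 1) * qBinomialCoeff_succ_mul (c := c) (g := g) hq₀ hq₁ k
  have hdiff : qBinomialSeries q c g x - qBinomialSeries q c g (q * x) =
      c * x * qBinomialSeries q c g x - g * x * qBinomialSeries q c g (q * x) := by
    rw [qBinomialSeries, qBinomialSeries, ← hF.tsum_sub hFq, (hF.sub hFq).tsum_eq_zero_add]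
    simp only [hshift, pow_zero, sub_self, zero_add]
    rw [(hF.mul_left _).tsum_sub (hFq.mul_left _), tsum_mul_left, tsum_mul_left]
  linear_combination hdiff

theorem qBinomialSeries_pos (hq₀ : 0 ≤ q) (hq₁ : q < 1) (hc₀ : 0 ≤ c) (hc₁ : c < 1)
    (hgc : g ≤ c) : 0 < qBinomialSeries q c g 1 := by
  refine zero_lt_one.trans_le ?_
  simpa [qBinomialSeries, qBinomialCoeff] using (summable_qBinomialCoeff_mul_pow hq₀ hq₁ hc₀ hc₁ hgc
    unitInterval.one_mem).le_tsum 0 fun k _ =>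
      mul_nonneg (qBinomialCoeff_nonneg hq₀ hq₁ hc₀ hgc k) (pow_nonneg zero_le_one k)

theorem qBinomialSeries_pow (hq₀ : 0 ≤ q) (hq₁ : q < 1) (hc₀ : 0 ≤ c) (hc₁ : c < 1)
    (hgc : g ≤ c) (n : ℕ) :
    qBinomialSeries q c g (q ^ n) =
      qBinomialSeries q c g 1 * ∏ m ∈ range n, (1 - c * q ^ m) / (1 - g * q ^ m) := by
  induction n with
  | zero => simp
  | succ n ih =>
    have hg : 1 - g * q ^ n ≠ 0 :=
      (sub_pos.2 ((mul_pow_le_of_le hq₀ hq₁.le hc₀ hgc n).trans_lt hc₁)).ne'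
    have hfe := qBinomialSeries_functional_eq hq₀ hq₁ hc₀ hc₁ hgc
      ⟨pow_nonneg hq₀ n, pow_le_one₀ hq₀ hq₁.le⟩
    rw [← pow_succ'] at hfe
    rw [prod_range_succ, ← mul_assoc, ← ih, mul_div_assoc', eq_div_iff hg]
    linear_combination -hfe

end QBinomial

theorem isHausdorffMomentSeq_prod_one_sub_div {q c g : ℝ} (hq₀ : 0 ≤ q) (hq₁ : q < 1) (hc₀ : 0 ≤ c)
    (hc₁ : c < 1) (hgc : g ≤ c) :
    IsHausdorffMomentSeq fun n => ∏ m ∈ range n, (1 - c * q ^ m) / (1 - g * q ^ m) := by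
  have hS := qBinomialSeries_pos hq₀ hq₁ hc₀ hc₁ hgc
  have hsum {x : ℝ} (hx : x ∈ unitInterval) :=
    (summable_qBinomialCoeff_mul_pow hq₀ hq₁ hc₀ hc₁ hgc hx).hasSum.div_const
      (qBinomialSeries q c g 1)
  refine .of_hasSum (p := fun k => qBinomialCoeff q c g k / qBinomialSeries q c g 1) (x := (q ^ ·))
    (fun k => div_nonneg (qBinomialCoeff_nonneg hq₀ hq₁ hc₀ hgc k) hS.le) ?_
    (fun k => ⟨pow_nonneg hq₀ k, pow_le_one₀ hq₀ hq₁.le⟩) fun n => ?_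
  · have hS₁ : ∑' k, qBinomialCoeff q c g k = qBinomialSeries q c g 1 := by simp [qBinomialSeries]
    simpa [hS₁, hS.ne'] using hsum unitInterval.one_mem
  · have h := hsum (x := q ^ n) ⟨pow_nonneg hq₀ n, pow_le_one₀ hq₀ hq₁.le⟩
    rw [← qBinomialSeries, qBinomialSeries_pow hq₀ hq₁ hc₀ hc₁ hgc,
      mul_div_cancel_left₀ _ hS.ne'] at h
    refine (funext fun k => ?_ : (fun k => _) = _) ▸ h
    rw [← pow_mul, ← pow_mul, mul_comm k n, div_mul_eq_mul_div]

theorem one_sub_div_mul_inv_two_pow {K : ℝ} (hK : K ≠ 0) (a : ℝ) (m : ℕ) :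
    1 - (a - 1) / K * 2⁻¹ ^ m = (2 ^ m * K + 1 - a) / (2 ^ m * K) := by
  rw [inv_pow]
  field_simp
  ring

/-- Let `d ≥ 1`, `s ≥ d`, `j ≥ 0`, and let
`wₙ² = (2ⁿ(2d+j)+1−2d)(2ⁿ(2d+j)+1−d)/(2ⁿ(2d+j)+1+s−2d)²` with moments
`γₙ = ∏_{m<n} w_m²`.  Then the `γₙ` are the moments of a probability measure supported in
`[0,1]`.  These are the moments of the shift on the orbit of founder `j` in the direct sum
decomposition of `B*_{zᵗ z̄ˢ}` (`t = s − d ≥ 0`) on the Bergman space; hence each such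
shift, and therefore `B*_{zᵗ z̄ˢ}`, is subnormal, and `B_{zᵗ z̄ˢ}` is not hyponormal. -/
theorem subnormal_shift_general_case (d s j : ℤ) (hd : 1 ≤ d) (hds : d ≤ s) (hj : 0 ≤ j) :
    ∃ μ : Measure ℝ, IsProbabilityMeasure μ ∧ μ (Set.Icc (0 : ℝ) 1)ᶜ = 0 ∧
      ∀ n : ℕ, ∫ t, t ^ n ∂μ =
        ∏ m ∈ Finset.range n,
          (((2 : ℝ) ^ m * (2 * (d : ℝ) + (j : ℝ)) + 1 - 2 * (d : ℝ)) *
              ((2 : ℝ) ^ m * (2 * (d : ℝ) + (j : ℝ)) + 1 - (d : ℝ)) /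
            ((2 : ℝ) ^ m * (2 * (d : ℝ) + (j : ℝ)) + 1 + (s : ℝ) - 2 * (d : ℝ)) ^ 2) := by
  have hd' : (1 : ℝ) ≤ d := by exact_mod_cast hd
  have hds' : (d : ℝ) ≤ s := by exact_mod_cast hds
  have hj' : (0 : ℝ) ≤ j := by exact_mod_cast hj
  set K : ℝ := 2 * d + j
  have hK : 0 < K := by positivity
  have hmoments (a : ℝ) (ha₀ : 1 ≤ a) (ha₁ : a < K + 1) (hsa : 2 * d - s ≤ a) :
      IsHausdorffMomentSeq fun n =>
        ∏ m ∈ range n, (1 - (a - 1) / K * 2⁻¹ ^ m) / (1 - (2 * d - s - 1) / K * 2⁻¹ ^ m) :=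
    isHausdorffMomentSeq_prod_one_sub_div (by norm_num) (by norm_num)
      (div_nonneg (by linarith) hK.le) ((div_lt_one hK).2 (by linarith))
      (div_le_div_of_nonneg_right (by linarith) hK.le)
  obtain ⟨μ, hμ, hsupp, hmom⟩ := (hmoments (2 * d) (by linarith) (by linarith) (by linarith)).mul
    (hmoments d hd' (by linarith) (by linarith))
  refine ⟨μ, hμ, hsupp, fun n => (hmom n).trans ?_⟩
  dsimp only
  rw [← prod_mul_distrib]
  refine prod_congr rfl fun m _ => ?_
  have hK₀ : (2 : ℝ) ^ m * K ≠ 0 := by positivity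
  rw [one_sub_div_mul_inv_two_pow hK.ne', one_sub_div_mul_inv_two_pow hK.ne',
    one_sub_div_mul_inv_two_pow hK.ne', div_div_div_cancel_right₀ hK₀,
    div_div_div_cancel_right₀ hK₀, div_mul_div_comm, ← sq]
  ring
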